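/- For 1 < p < ∞, the dual n-dimensional Hardy operator 𝓗*f(x) = ∫_{|t|≥|x|} f(t)/|t|^n dt satisfies ‖𝓗*f‖_{L^p(ℝⁿ)} ≤ C(n,p) ‖f‖_{L^p(ℝⁿ)} for some constant C(n,p) and all nonnegative measurable f. -/

import Mathlib

open MeasureTheory Metric Set
open scoped ENNReal

noncomputable section

section Aux

open ENNReal

variable {E : Type*} [NormedAddCommGroup E] [NormedSpace ℝ E]
  [MeasurableSpace E] [BorelSpace E] [FiniteDimensional ℝ E] [Nontrivial E]
  (μ : Measure E) [μ.IsAddHaarMeasure]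

/-- Polar-coordinates formula for the Lebesgue integral of a radial function. -/
lemma lintegral_norm_polar (g : ℝ → ℝ≥0∞) (hg : Measurable g) :
    ∫⁻ x, g ‖x‖ ∂μ = (Module.finrank ℝ E) * μ (ball 0 1) *
      ∫⁻ y in Ioi (0:ℝ), ENNReal.ofReal (y ^ (Module.finrank ℝ E - 1)) * g y := by
  set m := Module.finrank ℝ E with hm
  have h0 : ∫⁻ x, g ‖x‖ ∂μ = ∫⁻ x : ({(0:E)}ᶜ : Set E), g ‖(x:E)‖ ∂(μ.comap (↑)) := by
    rw [lintegral_subtype_comap (measurableSet_singleton (0:E)).compl (fun a => g ‖a‖),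
      restrict_compl_singleton]
  have hG : Measurable (fun z : sphere (0:E) 1 × Ioi (0:ℝ) => g z.2) :=
    hg.comp (measurable_subtype_coe.comp measurable_snd)
  have h1 : ∫⁻ x : ({(0:E)}ᶜ : Set E), g ‖(x:E)‖ ∂(μ.comap (↑))
      = ∫⁻ z : sphere (0:E) 1 × Ioi (0:ℝ), g z.2
          ∂(μ.toSphere.prod (Measure.volumeIoiPow (m - 1))) :=
    by simpa only [homeomorphUnitSphereProd_apply_snd_coe] using
      μ.measurePreserving_homeomorphUnitSphereProd.lintegral_comp hG
  have h2 : ∫⁻ z : sphere (0:E) 1 × Ioi (0:ℝ), g z.2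
        ∂(μ.toSphere.prod (Measure.volumeIoiPow (m - 1)))
      = μ.toSphere univ * ∫⁻ y : Ioi (0:ℝ), g y ∂(Measure.volumeIoiPow (m - 1)) := by
    rw [lintegral_prod (fun z : sphere (0:E) 1 × Ioi (0:ℝ) => g z.2) hG.aemeasurable]
    simp only [lintegral_const]
    rw [mul_comm]
  have hdens : Measurable (fun r : Ioi (0:ℝ) => ENNReal.ofReal (r.1 ^ (m - 1))) :=
    (measurable_subtype_coe.pow_const _).ennreal_ofReal
  have h3 : ∫⁻ y : Ioi (0:ℝ), g y ∂(Measure.volumeIoiPow (m - 1))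
      = ∫⁻ y in Ioi (0:ℝ), ENNReal.ofReal (y ^ (m - 1)) * g y := by
    rw [Measure.volumeIoiPow,
      lintegral_withDensity_eq_lintegral_mul _ hdens
        (g := fun y : Ioi (0:ℝ) => g ↑y) (hg.comp measurable_subtype_coe)]
    simp only [Pi.mul_apply]
    exact lintegral_subtype_comap measurableSet_Ioi
      (fun y => ENNReal.ofReal (y ^ (m - 1)) * g y)
  rw [h0, h1, h2, h3, Measure.toSphere_apply_univ]

/-- Radial power integral over the complement of a ball. -/
lemma lintegral_rpow_norm_compl_ball {e r : ℝ}
    (he : e < -(Module.finrank ℝ E : ℝ)) (hr : 0 < r) :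
    ∫⁻ x in (ball (0:E) r)ᶜ, ENNReal.ofReal ‖x‖ ^ e ∂μ
      = (Module.finrank ℝ E) * μ (ball 0 1) *
        ENNReal.ofReal (1/(-(e + Module.finrank ℝ E)) * r ^ (e + Module.finrank ℝ E)) := by
  set m := Module.finrank ℝ E with hm
  have hm1 : 1 ≤ m := Module.finrank_pos
  have hm1' : (1:ℝ) ≤ m := Nat.one_le_cast.2 hm1
  have key : ∀ x : E, ((ball (0:E) r)ᶜ).indicator (fun x => ENNReal.ofReal ‖x‖ ^ e) x
      = (Ici r).indicator (fun y => ENNReal.ofReal y ^ e) ‖x‖ := by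
    classical
    intro x
    rw [Set.indicator_apply, Set.indicator_apply]
    have hiff : x ∈ (ball (0:E) r)ᶜ ↔ ‖x‖ ∈ Ici r := by
      simp [mem_ball_zero_iff, not_lt]
    by_cases hx : ‖x‖ ∈ Ici r
    · rw [if_pos hx, if_pos (hiff.2 hx)]
    · rw [if_neg hx, if_neg fun h => hx (hiff.1 h)]
  rw [← lintegral_indicator measurableSet_ball.compl _]
  simp_rw [key]
  rw [lintegral_norm_polar μ _
    ((ENNReal.measurable_ofReal.pow_const e).indicator measurableSet_Ici)]
  have h1 : ∫⁻ y in Ioi (0:ℝ), ENNReal.ofReal (y ^ (m-1)) *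
        (Ici r).indicator (fun y => ENNReal.ofReal y ^ e) y
      = ∫⁻ y in Ioi r, ENNReal.ofReal (y ^ ((m:ℝ) - 1 + e)) := by
    have hpt : ∀ y : ℝ, ENNReal.ofReal (y ^ (m-1)) *
          (Ici r).indicator (fun y => ENNReal.ofReal y ^ e) y
        = (Ici r).indicator (fun y => ENNReal.ofReal (y ^ (m-1)) * ENNReal.ofReal y ^ e) y := by
      intro y; by_cases hy : y ∈ Ici r <;> simp [hy]
    simp_rw [hpt]
    have hIci : Ici r ∩ Ioi (0:ℝ) = Ici r :=
      inter_eq_left.2 fun y (hy : y ∈ Ici r) => mem_Ioi.2 (lt_of_lt_of_le hr hy)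
    rw [lintegral_indicator measurableSet_Ici _, Measure.restrict_restrict measurableSet_Ici,
      hIci, ← Measure.restrict_congr_set Ioi_ae_eq_Ici]
    refine setLIntegral_congr_fun measurableSet_Ioi (fun y hy => ?_)
    have h0 : (0:ℝ) < y := hr.trans hy
    rw [ENNReal.ofReal_rpow_of_pos h0, ← ENNReal.ofReal_mul (by positivity)]
    congr 1
    rw [← Real.rpow_natCast y (m-1), ← Real.rpow_add h0]
    congr 1
    rw [Nat.cast_sub hm1, Nat.cast_one]
  rw [h1]
  have ha : (m:ℝ) - 1 + e < -1 := by linarith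
  rw [← ofReal_integral_eq_lintegral_ofReal (integrableOn_Ioi_rpow_of_lt ha hr)
    (by filter_upwards [ae_restrict_mem measurableSet_Ioi] with y hy using
      Real.rpow_nonneg (hr.trans hy).le _),
    integral_Ioi_rpow_of_lt ha hr]
  congr 1
  have hX : (m:ℝ) - 1 + e + 1 = e + m := by ring
  rw [hX, show (1:ℝ)/(-(e + (m:ℝ))) = -(e + (m:ℝ))⁻¹ by rw [one_div, inv_neg]]
  ring

/-- Radial power integral over a closed ball. -/
lemma lintegral_rpow_norm_closedBall {e r : ℝ}
    (he : -(Module.finrank ℝ E : ℝ) < e) (hr : 0 < r) :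
    ∫⁻ x in closedBall (0:E) r, ENNReal.ofReal ‖x‖ ^ e ∂μ
      = (Module.finrank ℝ E) * μ (ball 0 1) *
        ENNReal.ofReal (1/(e + Module.finrank ℝ E) * r ^ (e + Module.finrank ℝ E)) := by
  set m := Module.finrank ℝ E with hm
  have hm1 : 1 ≤ m := Module.finrank_pos
  have hm1' : (1:ℝ) ≤ m := Nat.one_le_cast.2 hm1
  have key : ∀ x : E, (closedBall (0:E) r).indicator (fun x => ENNReal.ofReal ‖x‖ ^ e) x
      = (Iic r).indicator (fun y => ENNReal.ofReal y ^ e) ‖x‖ := by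
    classical
    intro x
    rw [Set.indicator_apply, Set.indicator_apply]
    have hiff : x ∈ closedBall (0:E) r ↔ ‖x‖ ∈ Iic r := by
      simp [mem_closedBall_zero_iff]
    by_cases hx : ‖x‖ ∈ Iic r
    · rw [if_pos hx, if_pos (hiff.2 hx)]
    · rw [if_neg hx, if_neg fun h => hx (hiff.1 h)]
  rw [← lintegral_indicator measurableSet_closedBall _]
  simp_rw [key]
  rw [lintegral_norm_polar μ _
    ((ENNReal.measurable_ofReal.pow_const e).indicator measurableSet_Iic)]
  have h1 : ∫⁻ y in Ioi (0:ℝ), ENNReal.ofReal (y ^ (m-1)) *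
        (Iic r).indicator (fun y => ENNReal.ofReal y ^ e) y
      = ∫⁻ y in Ioc (0:ℝ) r, ENNReal.ofReal (y ^ ((m:ℝ) - 1 + e)) := by
    have hpt : ∀ y : ℝ, ENNReal.ofReal (y ^ (m-1)) *
          (Iic r).indicator (fun y => ENNReal.ofReal y ^ e) y
        = (Iic r).indicator (fun y => ENNReal.ofReal (y ^ (m-1)) * ENNReal.ofReal y ^ e) y := by
      intro y; by_cases hy : y ∈ Iic r <;> simp [hy]
    simp_rw [hpt]
    rw [lintegral_indicator measurableSet_Iic _, Measure.restrict_restrict measurableSet_Iic,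
      show Iic r ∩ Ioi (0:ℝ) = Ioc 0 r by ext y; simp [mem_Ioc, and_comm]]
    refine setLIntegral_congr_fun measurableSet_Ioc (fun y hy => ?_)
    have h0 : (0:ℝ) < y := hy.1
    rw [ENNReal.ofReal_rpow_of_pos h0, ← ENNReal.ofReal_mul (by positivity)]
    congr 1
    rw [← Real.rpow_natCast y (m-1), ← Real.rpow_add h0]
    congr 1
    rw [Nat.cast_sub hm1, Nat.cast_one]
  rw [h1]
  have ha : (-1:ℝ) < (m:ℝ) - 1 + e := by linarith
  have hint : IntegrableOn (fun y : ℝ => y ^ ((m:ℝ) - 1 + e)) (Ioc 0 r) volume :=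
    (intervalIntegral.intervalIntegrable_rpow' ha).1
  rw [← ofReal_integral_eq_lintegral_ofReal hint
    (by filter_upwards [ae_restrict_mem measurableSet_Ioc] with y hy using
      Real.rpow_nonneg hy.1.le _)]
  congr 1
  rw [← intervalIntegral.integral_of_le hr.le, integral_rpow (Or.inl ha)]
  have hX : (m:ℝ) - 1 + e + 1 = e + m := by ring
  rw [hX, Real.zero_rpow (ne_of_gt (by linarith : (0:ℝ) < e + m)), sub_zero]
  ring

end Aux

/-- The dual `n`-dimensional Hardy operator `𝓗*f(x) = ∫_{|t|≥|x|} f(t)/|t|ⁿ dt`. -/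
def nDualHardy (n : ℕ) (f : EuclideanSpace ℝ (Fin n) → ℝ) (x : EuclideanSpace ℝ (Fin n)) : ℝ :=
  ∫ t in (ball (0 : EuclideanSpace ℝ (Fin n)) ‖x‖)ᶜ, f t / ‖t‖ ^ n

/-- For `1 < p < ∞`, `𝓗*` is bounded on `L^p(ℝⁿ)`: there is a constant `C(n,p)` with
`‖𝓗*f‖_{L^p} ≤ C(n,p) ‖f‖_{L^p}` for all nonnegative measurable `f`. -/
theorem nDualHardy_Lp_bounded (n : ℕ) (hn : 0 < n) (p : ℝ) (hp : 1 < p) :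
    ∃ C : ℝ, 0 < C ∧ ∀ f : EuclideanSpace ℝ (Fin n) → ℝ, Measurable f → (∀ x, 0 ≤ f x) →
      eLpNorm (nDualHardy n f) (ENNReal.ofReal p) volume ≤
        ENNReal.ofReal C * eLpNorm f (ENNReal.ofReal p) volume := by
  classical
  haveI : Nontrivial (EuclideanSpace ℝ (Fin n)) :=
    Module.nontrivial_of_finrank_pos (R := ℝ) (by rw [finrank_euclideanSpace_fin]; exact hn)
  have hmfr : Module.finrank ℝ (EuclideanSpace ℝ (Fin n)) = n := finrank_euclideanSpace_fin
  have hn' : (0:ℝ) < n := Nat.cast_pos.2 hn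
  have hpq : p.HolderConjugate (p/(p-1)) := Real.HolderConjugate.conjExponent hp
  set q : ℝ := p/(p-1) with hq_def
  have hp0 : (0:ℝ) < p := hpq.pos
  have hq0 : (0:ℝ) < q := hpq.symm.pos
  have hp0' : p ≠ 0 := ne_of_gt hp0
  have hq0' : q ≠ 0 := ne_of_gt hq0
  have hp1 : p - 1 ≠ 0 := sub_ne_zero.2 (ne_of_gt hp)
  set s : ℝ := (n:ℝ) / p with hs_def
  have hs0 : 0 < s := div_pos hn' hp0
  have hsn : s < n := div_lt_self hn' hp
  -- exponent identities
  have hid1 : -(s/p) + -(((n:ℝ)+s)/q) = -(n:ℝ) := by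
    rw [hs_def, hq_def]; field_simp; ring
  have hid2 : -(s/p) * p = -s := by field_simp
  have hid3 : -(((n:ℝ)+s)/q) * q = -((n:ℝ)+s) := by field_simp
  have hid5 : -s * ((1/q) * p) = s - n := by
    rw [hs_def, hq_def]; field_simp; ring
  -- constants
  set A : ℝ≥0∞ := (n : ℝ≥0∞) * volume (ball (0 : EuclideanSpace ℝ (Fin n)) 1) with hA_def
  set K : ℝ≥0∞ := A * ENNReal.ofReal (1/s) with hK_def
  have hKtop : K ≠ ⊤ :=
    ENNReal.mul_ne_top (ENNReal.mul_ne_top (by simp) measure_ball_lt_top.ne)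
      ENNReal.ofReal_ne_top
  set C0 : ℝ≥0∞ := (K ^ (p/q) * K) ^ (1/p) with hC0_def
  have hC0top : C0 ≠ ⊤ :=
    ENNReal.rpow_ne_top_of_nonneg (by positivity)
      (ENNReal.mul_ne_top (ENNReal.rpow_ne_top_of_nonneg (by positivity) hKtop) hKtop)
  refine ⟨C0.toReal + 1, by positivity, fun f hf hf0 => ?_⟩
  have hC0le : C0 ≤ ENNReal.ofReal (C0.toReal + 1) := by
    conv_lhs => rw [← ENNReal.ofReal_toReal hC0top]
    exact ENNReal.ofReal_le_ofReal (by linarith)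
  -- nonnegativity of the Hardy transform
  have hHnn : ∀ x, 0 ≤ nDualHardy n f x := fun x =>
    integral_nonneg fun t => div_nonneg (hf0 t) (by positivity)
  -- eLpNorm as lintegral
  have hP0 : (ENNReal.ofReal p) ≠ 0 := by
    simp only [ne_eq, ENNReal.ofReal_eq_zero, not_le]; exact hp0
  have hPr : (ENNReal.ofReal p).toReal = p := ENNReal.toReal_ofReal hp0.le
  rw [eLpNorm_eq_lintegral_rpow_enorm_toReal hP0 ENNReal.ofReal_ne_top,
    eLpNorm_eq_lintegral_rpow_enorm_toReal hP0 ENNReal.ofReal_ne_top, hPr]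
  have hLH : ∫⁻ x, ‖nDualHardy n f x‖ₑ ^ p
      = ∫⁻ x, ENNReal.ofReal (nDualHardy n f x) ^ p :=
    lintegral_congr fun x => by rw [Real.enorm_eq_ofReal (hHnn x)]
  have hLf : ∫⁻ x, ‖f x‖ₑ ^ p = ∫⁻ x, ENNReal.ofReal (f x) ^ p :=
    lintegral_congr fun x => by rw [Real.enorm_eq_ofReal (hf0 x)]
  rw [hLH, hLf]
  -- the inner integral
  set h : EuclideanSpace ℝ (Fin n) → ℝ≥0∞ :=
    fun t => ENNReal.ofReal (f t) ^ p * ENNReal.ofReal ‖t‖ ^ (-s) with hh_def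
  have hhm : Measurable h :=
    ((hf.ennreal_ofReal).pow_const p).mul ((measurable_norm.ennreal_ofReal).pow_const (-s))
  set I₁ : EuclideanSpace ℝ (Fin n) → ℝ≥0∞ :=
    fun x => ∫⁻ t in (ball (0:EuclideanSpace ℝ (Fin n)) ‖x‖)ᶜ, h t with hI₁_def
  -- indicator reformulation of I₁
  set ind : EuclideanSpace ℝ (Fin n) × EuclideanSpace ℝ (Fin n) → ℝ≥0∞ :=
    fun z => {z' : EuclideanSpace ℝ (Fin n) × EuclideanSpace ℝ (Fin n) |
      ‖z'.1‖ ≤ ‖z'.2‖}.indicator (fun z' => h z'.2) z with hind_def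
  have hSmeas : MeasurableSet {z' : EuclideanSpace ℝ (Fin n) × EuclideanSpace ℝ (Fin n) |
      ‖z'.1‖ ≤ ‖z'.2‖} :=
    measurableSet_le (measurable_norm.comp measurable_fst) (measurable_norm.comp measurable_snd)
  have hindm : Measurable ind := (hhm.comp measurable_snd).indicator hSmeas
  have hI₁eq : ∀ x, I₁ x = ∫⁻ t, ind (x, t) := by
    intro x
    simp only [hI₁_def]
    rw [← lintegral_indicator measurableSet_ball.compl h]
    refine lintegral_congr fun t => ?_
    simp only [hind_def, Set.indicator_apply, mem_setOf_eq, mem_compl_iff,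
      mem_ball_zero_iff, not_lt]
  have hI₁m : Measurable I₁ := by
    have hm2 : Measurable fun x => ∫⁻ t, ind (x, t) :=
      Measurable.lintegral_prod_right (f := fun x t => ind (x, t)) hindm
    have hfe : I₁ = fun x => ∫⁻ t, ind (x, t) := funext hI₁eq
    rw [hfe]; exact hm2
  -- pointwise Hölder bound
  have stepB : ∀ x : EuclideanSpace ℝ (Fin n), x ≠ 0 →
      ENNReal.ofReal (nDualHardy n f x) ^ p ≤
        K ^ (p/q) * (ENNReal.ofReal ‖x‖ ^ (s - n) * I₁ x) := by
    intro x hx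
    have hr : (0:ℝ) < ‖x‖ := norm_pos_iff.2 hx
    have b1 : ENNReal.ofReal (nDualHardy n f x) ≤
        ∫⁻ t in (ball (0:EuclideanSpace ℝ (Fin n)) ‖x‖)ᶜ, ENNReal.ofReal (f t / ‖t‖ ^ n) := by
      rw [← Real.enorm_eq_ofReal (hHnn x)]
      refine le_trans (enorm_integral_le_lintegral_enorm _) (le_of_eq ?_)
      exact lintegral_congr fun t =>
        Real.enorm_eq_ofReal (div_nonneg (hf0 t) (by positivity))
    have b2 : ∫⁻ t in (ball (0:EuclideanSpace ℝ (Fin n)) ‖x‖)ᶜ, ENNReal.ofReal (f t / ‖t‖ ^ n)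
        = ∫⁻ t in (ball (0:EuclideanSpace ℝ (Fin n)) ‖x‖)ᶜ,
            (ENNReal.ofReal (f t) * ENNReal.ofReal ‖t‖ ^ (-(s/p))) *
             ENNReal.ofReal ‖t‖ ^ (-(((n:ℝ)+s)/q)) := by
      refine setLIntegral_congr_fun measurableSet_ball.compl (fun t ht => ?_)
      have htn : ‖x‖ ≤ ‖t‖ := by simpa [mem_ball_zero_iff, not_lt] using ht
      have ht0 : (0:ℝ) < ‖t‖ := lt_of_lt_of_le hr htn
      have hw0 : ENNReal.ofReal ‖t‖ ≠ 0 := by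
        simp only [ne_eq, ENNReal.ofReal_eq_zero, not_le]; exact ht0
      have hwt : ENNReal.ofReal ‖t‖ ≠ ⊤ := ENNReal.ofReal_ne_top
      rw [ENNReal.ofReal_div_of_pos (by positivity),
        show (‖t‖ ^ n) = ‖t‖ ^ (n:ℝ) from (Real.rpow_natCast _ n).symm,
        ← ENNReal.ofReal_rpow_of_pos ht0, div_eq_mul_inv, ← ENNReal.rpow_neg,
        ← hid1, ENNReal.rpow_add _ _ hw0 hwt, ← mul_assoc]
    have b3 : ∫⁻ t in (ball (0:EuclideanSpace ℝ (Fin n)) ‖x‖)ᶜ,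
        (ENNReal.ofReal (f t) * ENNReal.ofReal ‖t‖ ^ (-(s/p))) *
          ENNReal.ofReal ‖t‖ ^ (-(((n:ℝ)+s)/q))
        ≤ (∫⁻ t in (ball (0:EuclideanSpace ℝ (Fin n)) ‖x‖)ᶜ,
            (ENNReal.ofReal (f t) * ENNReal.ofReal ‖t‖ ^ (-(s/p))) ^ p) ^ (1/p) *
          (∫⁻ t in (ball (0:EuclideanSpace ℝ (Fin n)) ‖x‖)ᶜ,
            (ENNReal.ofReal ‖t‖ ^ (-(((n:ℝ)+s)/q))) ^ q) ^ (1/q) := by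
      simpa [Pi.mul_apply] using ENNReal.lintegral_mul_le_Lp_mul_Lq
        (volume.restrict (ball (0:EuclideanSpace ℝ (Fin n)) ‖x‖)ᶜ) hpq
        (((hf.ennreal_ofReal).mul ((measurable_norm.ennreal_ofReal).pow_const
          (-(s/p)))).aemeasurable)
        (((measurable_norm.ennreal_ofReal).pow_const (-(((n:ℝ)+s)/q))).aemeasurable)
    have b4 : ∫⁻ t in (ball (0:EuclideanSpace ℝ (Fin n)) ‖x‖)ᶜ,
        (ENNReal.ofReal (f t) * ENNReal.ofReal ‖t‖ ^ (-(s/p))) ^ p = I₁ x := by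
      rw [hI₁_def]
      refine setLIntegral_congr_fun measurableSet_ball.compl (fun t ht => ?_)
      rw [ENNReal.mul_rpow_of_nonneg _ _ hp0.le, ← ENNReal.rpow_mul, hid2, hh_def]
    have b5 : ∫⁻ t in (ball (0:EuclideanSpace ℝ (Fin n)) ‖x‖)ᶜ,
        (ENNReal.ofReal ‖t‖ ^ (-(((n:ℝ)+s)/q))) ^ q
        = K * ENNReal.ofReal ‖x‖ ^ (-s) := by
      have hcongr : ∫⁻ t in (ball (0:EuclideanSpace ℝ (Fin n)) ‖x‖)ᶜ,
          (ENNReal.ofReal ‖t‖ ^ (-(((n:ℝ)+s)/q))) ^ q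
          = ∫⁻ t in (ball (0:EuclideanSpace ℝ (Fin n)) ‖x‖)ᶜ,
            ENNReal.ofReal ‖t‖ ^ (-((n:ℝ)+s)) := by
        refine setLIntegral_congr_fun measurableSet_ball.compl (fun t ht => ?_)
        rw [← ENNReal.rpow_mul, hid3]
      have hval := lintegral_rpow_norm_compl_ball (E := EuclideanSpace ℝ (Fin n)) volume
        (e := -((n:ℝ)+s)) (by rw [hmfr]; linarith) hr
      rw [hmfr] at hval
      rw [hcongr, hval]
      have he1 : -((n:ℝ)+s) + (n:ℝ) = -s := by ring
      rw [he1, hK_def, hA_def]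
      have he2 : (1:ℝ)/(-(-s)) = 1/s := by rw [neg_neg]
      rw [he2, ENNReal.ofReal_mul (by positivity), ← ENNReal.ofReal_rpow_of_pos hr]
      ring
    have b7 : ENNReal.ofReal (nDualHardy n f x) ≤
        I₁ x ^ (1/p) * (K * ENNReal.ofReal ‖x‖ ^ (-s)) ^ (1/q) := by
      refine le_trans b1 (le_trans (le_of_eq b2) (le_trans b3 (le_of_eq ?_)))
      rw [b4, b5]
    calc ENNReal.ofReal (nDualHardy n f x) ^ p
        ≤ (I₁ x ^ (1/p) * (K * ENNReal.ofReal ‖x‖ ^ (-s)) ^ (1/q)) ^ p :=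
          ENNReal.rpow_le_rpow b7 hp0.le
      _ = K ^ (p/q) * (ENNReal.ofReal ‖x‖ ^ (s - n) * I₁ x) := by
          rw [ENNReal.mul_rpow_of_nonneg _ _ hp0.le, ← ENNReal.rpow_mul, ← ENNReal.rpow_mul,
            one_div p, inv_mul_cancel₀ hp0', ENNReal.rpow_one,
            ENNReal.mul_rpow_of_nonneg _ _ (by positivity : (0:ℝ) ≤ 1/q * p),
            ← ENNReal.rpow_mul, hid5,
            show (1:ℝ)/q * p = p/q by ring]
          ring
  -- integrate the pointwise bound
  have stepC : ∫⁻ x, ENNReal.ofReal (nDualHardy n f x) ^ p ≤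
      K ^ (p/q) * ∫⁻ x, ENNReal.ofReal ‖x‖ ^ (s - n) * I₁ x := by
    rw [← lintegral_const_mul _ (f := fun x => ENNReal.ofReal ‖x‖ ^ (s - n) * I₁ x) (((measurable_norm.ennreal_ofReal).pow_const (s-n)).mul hI₁m)]
    refine lintegral_mono_ae ?_
    have h0 : ∀ᵐ x : EuclideanSpace ℝ (Fin n) ∂volume, x ≠ 0 := by
      rw [ae_iff]
      simpa using measure_singleton (0 : EuclideanSpace ℝ (Fin n))
    filter_upwards [h0] with x hx using stepB x hx
  -- Tonelli
  have stepD : ∫⁻ x, ENNReal.ofReal ‖x‖ ^ (s - n) * I₁ x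
      ≤ K * ∫⁻ t, ENNReal.ofReal (f t) ^ p := by
    have hv : Measurable fun x : EuclideanSpace ℝ (Fin n) =>
        ENNReal.ofReal ‖x‖ ^ (s - n) := (measurable_norm.ennreal_ofReal).pow_const (s-n)
    have swap1 : ∫⁻ x, ENNReal.ofReal ‖x‖ ^ (s - n) * I₁ x
        = ∫⁻ t, ∫⁻ x, ENNReal.ofReal ‖x‖ ^ (s - n) * ind (x, t) := by
      rw [← lintegral_lintegral_swap
        (((hv.comp measurable_fst).mul hindm).aemeasurable)]
      refine lintegral_congr fun x => ?_
      rw [hI₁eq x, ← lintegral_const_mul (ENNReal.ofReal ‖x‖ ^ (s - n))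
        (f := fun t => ind (x, t)) (hindm.comp measurable_prodMk_left)]
    rw [swap1]
    have inner_le : ∀ t : EuclideanSpace ℝ (Fin n), t ≠ 0 →
        ∫⁻ x, ENNReal.ofReal ‖x‖ ^ (s - n) * ind (x, t) = K * ENNReal.ofReal (f t) ^ p := by
      intro t ht
      have hrt : (0:ℝ) < ‖t‖ := norm_pos_iff.2 ht
      have hpt : ∀ x : EuclideanSpace ℝ (Fin n),
          ENNReal.ofReal ‖x‖ ^ (s - n) * ind (x, t)
          = (closedBall (0:EuclideanSpace ℝ (Fin n)) ‖t‖).indicator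
              (fun x => ENNReal.ofReal ‖x‖ ^ (s - n) * h t) x := by
        intro x
        simp only [hind_def, Set.indicator_apply, mem_setOf_eq, mem_closedBall_zero_iff]
        by_cases hc : ‖x‖ ≤ ‖t‖
        · rw [if_pos hc, if_pos hc]
        · rw [if_neg hc, if_neg hc, mul_zero]
      simp_rw [hpt]
      rw [lintegral_indicator measurableSet_closedBall _, lintegral_mul_const _ hv]
      have hval := lintegral_rpow_norm_closedBall (E := EuclideanSpace ℝ (Fin n)) volume
        (e := s - (n:ℝ)) (by rw [hmfr]; linarith) hrt
      rw [hmfr] at hval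
      have he1 : s - (n:ℝ) + (n:ℝ) = s := by ring
      rw [he1] at hval
      rw [hval, hh_def]
      have hw0 : ENNReal.ofReal ‖t‖ ≠ 0 := by
        simp only [ne_eq, ENNReal.ofReal_eq_zero, not_le]; exact hrt
      have hwt : ENNReal.ofReal ‖t‖ ≠ ⊤ := ENNReal.ofReal_ne_top
      rw [ENNReal.ofReal_mul (by positivity), ← ENNReal.ofReal_rpow_of_pos hrt, hK_def, hA_def]
      calc ↑n * volume (ball (0:EuclideanSpace ℝ (Fin n)) 1) *
            (ENNReal.ofReal (1/s) * ENNReal.ofReal ‖t‖ ^ s) *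
            (ENNReal.ofReal (f t) ^ p * ENNReal.ofReal ‖t‖ ^ (-s))
          = ↑n * volume (ball (0:EuclideanSpace ℝ (Fin n)) 1) * ENNReal.ofReal (1/s) *
            ENNReal.ofReal (f t) ^ p *
            (ENNReal.ofReal ‖t‖ ^ s * ENNReal.ofReal ‖t‖ ^ (-s)) := by ring
        _ = ↑n * volume (ball (0:EuclideanSpace ℝ (Fin n)) 1) * ENNReal.ofReal (1/s) *
            ENNReal.ofReal (f t) ^ p := by
            rw [← ENNReal.rpow_add _ _ hw0 hwt, add_neg_cancel, ENNReal.rpow_zero, mul_one]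
        _ = ↑n * volume (ball (0:EuclideanSpace ℝ (Fin n)) 1) * ENNReal.ofReal (1/s) *
            ENNReal.ofReal (f t) ^ p := rfl
    have hcong : ∫⁻ t, ∫⁻ x, ENNReal.ofReal ‖x‖ ^ (s - n) * ind (x, t)
        = ∫⁻ t, K * ENNReal.ofReal (f t) ^ p := by
      refine lintegral_congr_ae ?_
      have h0 : ∀ᵐ t : EuclideanSpace ℝ (Fin n) ∂volume, t ≠ 0 := by
        rw [ae_iff]
        simpa using measure_singleton (0 : EuclideanSpace ℝ (Fin n))
      filter_upwards [h0] with t ht using inner_le t ht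
    rw [hcong, lintegral_const_mul _ ((hf.ennreal_ofReal).pow_const p)]
  -- conclude
  have main : ∫⁻ x, ENNReal.ofReal (nDualHardy n f x) ^ p
      ≤ K ^ (p/q) * K * ∫⁻ t, ENNReal.ofReal (f t) ^ p := by
    refine le_trans stepC ?_
    rw [mul_assoc]
    exact mul_le_mul_right stepD _
  calc (∫⁻ x, ENNReal.ofReal (nDualHardy n f x) ^ p) ^ (1/p)
      ≤ (K ^ (p/q) * K * ∫⁻ t, ENNReal.ofReal (f t) ^ p) ^ (1/p) :=
        ENNReal.rpow_le_rpow main (by positivity)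
    _ = C0 * (∫⁻ t, ENNReal.ofReal (f t) ^ p) ^ (1/p) := by
        rw [ENNReal.mul_rpow_of_nonneg _ _ (by positivity : (0:ℝ) ≤ 1/p), hC0_def]
    _ ≤ ENNReal.ofReal (C0.toReal + 1) * (∫⁻ t, ENNReal.ofReal (f t) ^ p) ^ (1/p) :=
        mul_le_mul_left hC0le _
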